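/- Fix $t > 0$. For $\phi \in C([0,t];\mathbb{R})$ define $A_s(\phi) = \int_0^s e^{2\phi_u}\,du$ and $\mathcal{T}(\phi)(s) = \phi_s - \log\{1 + \frac{A_s(\phi)}{A_t(\phi)}(e^{2\phi_t} - 1)\}$. Then for every $s \in (0,t]$, $\frac{1}{A_s(\mathcal{T}(\phi))} = \frac{1}{A_s(\phi)} + \frac{e^{2\phi_t} - 1}{A_t(\phi)}$. -/

import Mathlib

/-- The exponential additive functional. -/
noncomputable def A (φ : ℝ → ℝ) (s : ℝ) : ℝ := ∫ u in (0:ℝ)..s, Real.exp (2 * φ u)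

/-- The transformation `𝒯` on paths over `[0,t]`. -/
noncomputable def T (t : ℝ) (φ : ℝ → ℝ) (s : ℝ) : ℝ :=
  φ s - Real.log (1 + A φ s / A φ t * (Real.exp (2 * φ t) - 1))

theorem stmt11 (t : ℝ) (ht : 0 < t) (φ : ℝ → ℝ)
    (hφ : ContinuousOn φ (Set.Icc 0 t)) :
    ∀ s ∈ Set.Ioc (0:ℝ) t,
      1 / A (T t φ) s = 1 / A φ s + (Real.exp (2 * φ t) - 1) / A φ t := by
  -- extend φ to a continuous function on ℝ
  set ψ : ℝ → ℝ := fun u => φ (min (max u 0) t) with hψdef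
  have hmem : ∀ u : ℝ, min (max u 0) t ∈ Set.Icc 0 t := by
    intro u
    constructor
    · exact le_min (le_max_right u 0) ht.le
    · exact min_le_right _ _
  have hψc : Continuous ψ := by
    apply hφ.comp_continuous
    · exact (continuous_id.max continuous_const).min continuous_const
    · exact hmem
  have hψeq : ∀ u ∈ Set.Icc (0:ℝ) t, ψ u = φ u := by
    intro u hu
    simp only [hψdef]
    rw [max_eq_left hu.1, min_eq_left hu.2]
  have hAeq : ∀ s ∈ Set.Icc (0:ℝ) t, A ψ s = A φ s := by
    intro s hs
    apply intervalIntegral.integral_congr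
    intro u hu
    rw [Set.uIcc_of_le hs.1] at hu
    show Real.exp (2 * ψ u) = Real.exp (2 * φ u)
    rw [hψeq u ⟨hu.1, hu.2.trans hs.2⟩]
  have hTeq : ∀ s ∈ Set.Icc (0:ℝ) t, T t ψ s = T t φ s := by
    intro s hs
    simp only [T, hψeq s hs, hψeq t ⟨ht.le, le_rfl⟩, hAeq s hs,
      hAeq t ⟨ht.le, le_rfl⟩]
  have hATeq : ∀ s ∈ Set.Icc (0:ℝ) t, A (T t ψ) s = A (T t φ) s := by
    intro s hs
    apply intervalIntegral.integral_congr
    intro u hu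
    rw [Set.uIcc_of_le hs.1] at hu
    show Real.exp (2 * T t ψ u) = Real.exp (2 * T t φ u)
    rw [hTeq u ⟨hu.1, hu.2.trans hs.2⟩]
  -- continuity and derivative of A ψ
  have hint : Continuous fun u => Real.exp (2 * ψ u) := by continuity
  have hderiv : ∀ x : ℝ, HasDerivAt (A ψ) (Real.exp (2 * ψ x)) x := by
    intro x
    exact intervalIntegral.integral_hasDerivAt_right
      (hint.intervalIntegrable _ _)
      (hint.stronglyMeasurableAtFilter _ _) hint.continuousAt
  have hApos : ∀ s : ℝ, 0 < s → 0 < A ψ s := by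
    intro s hs
    exact intervalIntegral.intervalIntegral_pos_of_pos
      (hint.intervalIntegrable _ _) (fun x => Real.exp_pos _) hs
  have hAt : 0 < A ψ t := hApos t ht
  have hAle : ∀ u ∈ Set.Icc (0:ℝ) t, A ψ u ≤ A ψ t := by
    intro u hu
    have : A ψ t - A ψ u = ∫ x in u..t, Real.exp (2 * ψ x) := by
      rw [A, A, ← intervalIntegral.integral_add_adjacent_intervals
        (hint.intervalIntegrable 0 u) (hint.intervalIntegrable u t)]
      ring
    nlinarith [intervalIntegral.integral_nonneg (μ := MeasureTheory.volume) hu.2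
      (fun x _ => (Real.exp_pos (2 * ψ x)).le)]
  have hAnn : ∀ u ∈ Set.Icc (0:ℝ) t, 0 ≤ A ψ u := by
    intro u hu
    rw [A]
    exact intervalIntegral.integral_nonneg hu.1 (fun x _ => (Real.exp_pos _).le)
  set c : ℝ := (Real.exp (2 * ψ t) - 1) / A ψ t with hc
  have hposd : ∀ u ∈ Set.Icc (0:ℝ) t, 0 < 1 + c * A ψ u := by
    intro u hu
    have h1 : 1 + c * A ψ t = Real.exp (2 * ψ t) := by
      rw [hc, div_mul_cancel₀ _ hAt.ne']; ring
    rcases le_or_gt 0 c with h | h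
    · nlinarith [hAnn u hu]
    · nlinarith [hAle u hu, Real.exp_pos (2 * ψ t)]
  -- main computation for ψ
  intro s hs
  have hsIcc : s ∈ Set.Icc (0:ℝ) t := ⟨hs.1.le, hs.2⟩
  have hAs : 0 < A ψ s := hApos s hs.1
  -- value of T in terms of c
  have hTval : ∀ u ∈ Set.Icc (0:ℝ) t,
      1 + A ψ u / A ψ t * (Real.exp (2 * ψ t) - 1) = 1 + c * A ψ u := by
    intro u hu
    rw [hc]
    ring
  have hexpT : ∀ u ∈ Set.Icc (0:ℝ) t,
      Real.exp (2 * T t ψ u) = Real.exp (2 * ψ u) / (1 + c * A ψ u) ^ 2 := by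
    intro u hu
    rw [T, hTval u hu, mul_sub, Real.exp_sub]
    congr 1
    rw [show (2:ℝ) * Real.log (1 + c * A ψ u)
        = Real.log ((1 + c * A ψ u) ^ 2) by
      rw [Real.log_pow]; push_cast; ring]
    exact Real.exp_log (pow_pos (hposd u hu) 2)
  -- F is the antiderivative
  set F : ℝ → ℝ := fun u => A ψ u / (1 + c * A ψ u) with hF
  have hFd : ∀ u ∈ Set.uIcc (0:ℝ) s,
      HasDerivAt F (Real.exp (2 * T t ψ u)) u := by
    intro u hu
    rw [Set.uIcc_of_le hs.1.le] at hu
    have huIcc : u ∈ Set.Icc (0:ℝ) t := ⟨hu.1, hu.2.trans hs.2⟩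
    have hne : (1 + c * A ψ u) ≠ 0 := (hposd u huIcc).ne'
    have := ((hderiv u).div ((hasDerivAt_const u (1:ℝ)).add
      ((hderiv u).const_mul c)) hne)
    refine HasDerivAt.congr_deriv this ?_
    rw [hexpT u huIcc]
    simp only [Pi.add_apply]
    rw [div_eq_div_iff (pow_ne_zero 2 hne) (pow_ne_zero 2 hne)]
    ring
  have hAc : Continuous (A ψ) := continuous_iff_continuousAt.2 fun x => (hderiv x).continuousAt
  have hcontT : ContinuousOn (fun u => Real.exp (2 * T t ψ u)) (Set.uIcc (0:ℝ) s) := by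
    rw [Set.uIcc_of_le hs.1.le]
    apply ContinuousOn.congr
      (f := fun u => Real.exp (2 * ψ u) / (1 + c * A ψ u) ^ 2)
    · apply ContinuousOn.div hint.continuousOn
        (by fun_prop : Continuous fun u => (1 + c * A ψ u) ^ 2).continuousOn
      intro u hu
      exact pow_ne_zero 2 (hposd u ⟨hu.1, hu.2.trans hs.2⟩).ne'
    · intro u hu
      exact hexpT u ⟨hu.1, hu.2.trans hs.2⟩
  have hFTC : A (T t ψ) s = F s - F 0 := by
    rw [A]
    exact intervalIntegral.integral_eq_sub_of_hasDerivAt hFd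
      (hcontT.intervalIntegrable)
  have hA0 : A ψ 0 = 0 := intervalIntegral.integral_same
  have hF0 : F 0 = 0 := by simp [hF, hA0]
  have hFs : F s = A ψ s / (1 + c * A ψ s) := rfl
  have hkey : A (T t ψ) s = A ψ s / (1 + c * A ψ s) := by
    rw [hFTC, hF0, hFs, sub_zero]
  have hψt : ψ t = φ t := hψeq t ⟨ht.le, le_rfl⟩
  rw [← hATeq s hsIcc, ← hAeq s hsIcc, ← hAeq t ⟨ht.le, le_rfl⟩, ← hψt, hkey]
  have hden : (1 + c * A ψ s) ≠ 0 := (hposd s hsIcc).ne'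
  field_simp [hc]
  rw [hc, add_mul, mul_assoc, div_mul_cancel₀ _ hAt.ne']
  ring
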